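/- With notation as in the observer-based CP^1 construction, define for each d-subset I of {1,...,n} the element g_I = \odot_{i in I} L_i^k in Sym^d(P_{1,k}). Then p_I(g_{I'}) is nonzero if I = I' and equals 0 if I differs from I', for all d-subsets I, I' of {1,...,n}. -/

import Mathlib

open Polynomial Finset

/-- The bilinear pairing on binary forms of degree `k`, where a form
`q(u,v) = ∑ c_i u^(k-i) v^i` is encoded as the polynomial `∑ c_i X^i` (i.e. `u = 1`,
`X = v`):  `(q, q~) = ∑_{i=0}^k (-1)^i c_i d_{k-i} / binom(k,i)`. -/
noncomputable def bform (k : ℕ) (q r : Polynomial ℂ) : ℂ :=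
  ∑ i ∈ Finset.range (k + 1), (-1) ^ i * q.coeff i * r.coeff (k - i) / (k.choose i : ℂ)

/-! The pairing of a form `q` of degree `k` with the power `(a X - b)^k` of a linear form
is the value at `(b, a)` of the degree-`k` homogenization of `q`: the signs and the factors
`1 / binom(k, i)` in `bform` cancel those of the binomial expansion of `(a X - b)^k`.
For `q_I = ∏_{j ∉ I} L_j` this value at `z_i` is `∏_{j ∉ I} (u_j v_i - v_j u_i)`, a product
of determinants which vanishes exactly when `i ∉ I`, since the points `z_j` are distinct
in `CP^1`. So `∏_{i ∈ I'} (q_I, L_i^k)` is zero as soon as `I'` meets the complement of `I`,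
and nonzero for `I' = I`. -/

lemma coeff_C_mul_X_sub_C_pow {R : Type*} [CommRing R] (a b : R) (k m : ℕ) :
    ((C a * X - C b) ^ k).coeff m = k.choose m * a ^ m * (-b) ^ (k - m) := by
  have hterm : ∀ i, (C a * X) ^ i * C (-b) ^ (k - i) * (k.choose i : R[X])
      = C (a ^ i * (-b) ^ (k - i) * k.choose i) * X ^ i := by
    intro i; simp only [map_mul, map_pow, map_natCast]; ring
  rw [sub_eq_add_neg, ← C_neg, add_pow, finsetSum_coeff]
  simp only [hterm, coeff_C_mul_X_pow, sum_ite_eq, mem_range, Nat.lt_succ_iff]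
  split_ifs with hm
  · ring
  · simp [Nat.choose_eq_zero_of_lt (not_le.mp hm)]

lemma bform_C_mul_X_sub_C_pow (k : ℕ) (q : ℂ[X]) (a b : ℂ) :
    bform k q ((C a * X - C b) ^ k) = MvPolynomial.eval ![b, a] (q.homogenize k) := by
  rw [bform, homogenize, map_sum, Nat.sum_antidiagonal_eq_sum_range_succ_mk]
  refine sum_congr rfl fun i hi => ?_
  have hik : i ≤ k := Nat.lt_succ_iff.mp (mem_range.mp hi)
  have hchoose : (k.choose i : ℂ) ≠ 0 := Nat.cast_ne_zero.2 (Nat.choose_pos hik).ne'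
  have hsign : (-1 : ℂ) ^ i * (-b) ^ i = b ^ i := by rw [← mul_pow]; simp
  have hmonomial : (fun₀ | 0 => i | 1 => k - i).prod (fun n e => ![b, a] n ^ e)
      = b ^ i * a ^ (k - i) := by
    simp [Finsupp.prod_fintype]
  rw [MvPolynomial.eval_monomial, hmonomial, coeff_C_mul_X_sub_C_pow, Nat.sub_sub_self hik,
    Nat.choose_symm hik]
  field_simp
  linear_combination q.coeff i * a ^ (k - i) * hsign

lemma eval_homogenize_prod_C_mul_X_sub_C {R ι : Type*} [CommRing R] (s : Finset ι)
    (u v : ι → R) (x : Fin 2 → R) :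
    MvPolynomial.eval x ((∏ j ∈ s, (C (u j) * X - C (v j))).homogenize #s)
      = ∏ j ∈ s, (u j * x 0 - v j * x 1) := by
  have h := homogenize_finsetProd (s := s) (p := fun j => C (u j) * X - C (v j))
    (n := fun _ => 1) fun j _ => by rw [sub_eq_add_neg, ← C_neg]; exact natDegree_linear_le
  simp only [sum_const, smul_eq_mul, mul_one] at h
  simp [h]

lemma bform_prod_C_mul_X_sub_C {ι : Type*} (s : Finset ι) (u v : ι → ℂ) (a b : ℂ) :
    bform #s (∏ j ∈ s, (C (u j) * X - C (v j))) ((C a * X - C b) ^ #s)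
      = ∏ j ∈ s, (u j * b - v j * a) := by
  rw [bform_C_mul_X_sub_C_pow, eval_homogenize_prod_C_mul_X_sub_C]
  rfl

lemma exists_smul_eq_of_mul_sub_mul_eq_zero {K : Type*} [Field K] {a b c d : K}
    (hab : (a, b) ≠ 0) (h : c * b - d * a = 0) : ∃ t : K, (c, d) = t • (a, b) := by
  by_cases ha : a = 0
  · have hb : b ≠ 0 := fun hb => hab (by simp [ha, hb])
    refine ⟨d / b, ?_⟩
    have hc : c = 0 := by simpa [ha, hb] using h
    simp [ha, hc, hb]
  · refine ⟨c / a, ?_⟩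
    simp only [Prod.ext_iff, Prod.smul_mk, smul_eq_mul]
    constructor <;> field_simp
    linear_combination -h

theorem observer_maps_pairing_general (n d : ℕ)
    (u v : Fin n → ℂ) (hnz : ∀ i, ((u i, v i) : ℂ × ℂ) ≠ 0)
    (hdist : ∀ i j, i ≠ j → ¬ ∃ c : ℂ, ((u j, v j) : ℂ × ℂ) = c • (u i, v i))
    (I I' : Finset (Fin n))
    (hI : I ∈ Finset.powersetCard d (Finset.univ : Finset (Fin n)))
    (hI' : I' ∈ Finset.powersetCard d (Finset.univ : Finset (Fin n))) :
    (I = I' →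
      (∏ i ∈ I', bform (n - d)
        (∏ j ∈ Iᶜ, (Polynomial.C (u j) * Polynomial.X - Polynomial.C (v j)))
        ((Polynomial.C (u i) * Polynomial.X - Polynomial.C (v i)) ^ (n - d))) ≠ 0) ∧
    (I ≠ I' →
      (∏ i ∈ I', bform (n - d)
        (∏ j ∈ Iᶜ, (Polynomial.C (u j) * Polynomial.X - Polynomial.C (v j)))
        ((Polynomial.C (u i) * Polynomial.X - Polynomial.C (v i)) ^ (n - d))) = 0) := by
  have hcardI : #I = d := (mem_powersetCard.mp hI).2
  have hcardI' : #I' = d := (mem_powersetCard.mp hI').2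
  have hcompl : #Iᶜ = n - d := by rw [card_compl, Fintype.card_fin, hcardI]
  have hpair : ∀ i, bform (n - d) (∏ j ∈ Iᶜ, (C (u j) * X - C (v j)))
      ((C (u i) * X - C (v i)) ^ (n - d)) = ∏ j ∈ Iᶜ, (u j * v i - v j * u i) := fun i => by
    rw [← hcompl, bform_prod_C_mul_X_sub_C]
  simp only [hpair]
  refine ⟨?_, fun hne => ?_⟩
  · rintro rfl
    refine prod_ne_zero_iff.2 fun i hi => prod_ne_zero_iff.2 fun j hj hdet => ?_
    exact hdist i j (ne_of_mem_of_not_mem hi (mem_compl.1 hj))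
      (exists_smul_eq_of_mul_sub_mul_eq_zero (hnz i) hdet)
  · obtain ⟨i, hiI', hiI⟩ : ∃ i ∈ I', i ∉ I := not_subset.1 fun hsub =>
      hne (eq_of_subset_of_card_le hsub (by rw [hcardI, hcardI'])).symm
    exact prod_eq_zero hiI' (prod_eq_zero (mem_compl.2 hiI) (by ring))

/-- observer-based duality: with `q_I = ∏_{j ∈ Iᶜ} L_j`,
`p_I = Λ_{q_I}^{⊙ d}` and `g_I = ⊙_{i ∈ I} Lᵢ^k ∈ Sym^d(P_{1,k})`, the natural pairing
`p_I(g_{I'})` — given (up to the `d!` normalization) by `∏_{i ∈ I'} (q_I, Lᵢ^k)` — is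
nonzero if `I = I'` and zero if `I ≠ I'`. -/
theorem observer_maps_pairing (n d : ℕ) (hd : 1 ≤ d) (hdn : d ≤ n - 1)
    (u v : Fin n → ℂ) (hnz : ∀ i, ((u i, v i) : ℂ × ℂ) ≠ 0)
    (hdist : ∀ i j, i ≠ j → ¬ ∃ c : ℂ, ((u j, v j) : ℂ × ℂ) = c • (u i, v i))
    (I I' : Finset (Fin n))
    (hI : I ∈ Finset.powersetCard d (Finset.univ : Finset (Fin n)))
    (hI' : I' ∈ Finset.powersetCard d (Finset.univ : Finset (Fin n))) :
    (I = I' →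
      (∏ i ∈ I', bform (n - d)
        (∏ j ∈ Iᶜ, (Polynomial.C (u j) * Polynomial.X - Polynomial.C (v j)))
        ((Polynomial.C (u i) * Polynomial.X - Polynomial.C (v i)) ^ (n - d))) ≠ 0) ∧
    (I ≠ I' →
      (∏ i ∈ I', bform (n - d)
        (∏ j ∈ Iᶜ, (Polynomial.C (u j) * Polynomial.X - Polynomial.C (v j)))
        ((Polynomial.C (u i) * Polynomial.X - Polynomial.C (v i)) ^ (n - d))) = 0) :=
  observer_maps_pairing_general n d u v hnz hdist I I' hI hI'
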